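/- For every odd integer n ≥ 3 with n ≤ 9, the spider Sp(2^[n]) admits a local antimagic total labeling with exactly 2 distinct vertex weights in which the weight of the center x equals the common weight of all leaf vertices v_i, and this common value satisfies (n+1)(n+2)/2 ≤ w(x) ≤ 6n + 3. -/
import Mathlib


open Finset

variable {V : Type*} [Fintype V] [DecidableEq V]

/-- The weight of a vertex `u` under the total labeling given by vertex labels `fv`
and edge labels `fe` : `w(u) = f(u) + \sum_{e incident to u} f(e)`. -/
def latWeight (G : SimpleGraph V) [DecidableRel G.Adj]
    (fv : V → ℕ) (fe : Sym2 V → ℕ) (u : V) : ℕ :=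
  fv u + ∑ v ∈ G.neighborFinset u, fe s(u, v)

/-- `fv, fe` together form a bijection from `V(G) ∪ E(G)` onto `{1, …, p + q}`,
where `p` is the order and `q` is the size of `G`. -/
def IsTotalLabeling (G : SimpleGraph V) [DecidableRel G.Adj]
    (fv : V → ℕ) (fe : Sym2 V → ℕ) : Prop :=
  Set.BijOn (Sum.elim fv (fun e : G.edgeSet => fe (e : Sym2 V))) Set.univ
    (Set.Icc 1 (Fintype.card V + G.edgeFinset.card))

/-- A local antimagic total labeling of `G` : a bijective total labeling such that any two
adjacent vertices get distinct weights. -/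
def IsLocalAntimagicTotal (G : SimpleGraph V) [DecidableRel G.Adj]
    (fv : V → ℕ) (fe : Sym2 V → ℕ) : Prop :=
  IsTotalLabeling G fv fe ∧
    ∀ ⦃u v : V⦄, G.Adj u v → latWeight G fv fe u ≠ latWeight G fv fe v

/-- The local antimagic total chromatic number `χ_lat(G)` : the minimum number of distinct
vertex weights taken over all local antimagic total labelings of `G`. -/
noncomputable def chiLat (G : SimpleGraph V) [DecidableRel G.Adj] : ℕ :=
  sInf {c | ∃ fv fe, IsLocalAntimagicTotal G fv fe ∧
    (Finset.univ.image (latWeight G fv fe)).card = c}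

instance {W : Type*} (r : W → W → Prop) [DecidableEq W] [DecidableRel r] :
    DecidableRel (SimpleGraph.fromRel r).Adj :=
  fun a b => decidable_of_iff _ (SimpleGraph.fromRel_adj r a b).symm

/-- Adjacency for the spider `Sp(2^[n])` : the center `none` is adjacent to each middle
vertex `some (i, false)`, and `some (i, false)` is adjacent to the leaf `some (i, true)`. -/
def spider2R (n : ℕ) : Option (Fin n × Bool) → Option (Fin n × Bool) → Bool
  | none, some (_, false) => true
  | some (i, false), some (j, true) => decide (i = j)
  | _, _ => false

/-- The spider `Sp(2^[n])` with `n` legs of length `2`. -/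
abbrev spider2 (n : ℕ) : SimpleGraph (Option (Fin n × Bool)) :=
  SimpleGraph.fromRel (fun a b => spider2R n a b = true)


lemma isTotalLabeling_of {V : Type*} [Fintype V] [DecidableEq V]
    (G : SimpleGraph V) [DecidableRel G.Adj] (fv : V → ℕ) (fe : Sym2 V → ℕ)
    (h1 : Function.Injective (Sum.elim fv (fun e : G.edgeSet => fe (e : Sym2 V))))
    (h2 : Finset.univ.image (Sum.elim fv (fun e : G.edgeSet => fe (e : Sym2 V))) =
      Finset.Icc 1 (Fintype.card V + G.edgeFinset.card)) :
    IsTotalLabeling G fv fe := by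
  set f := Sum.elim fv (fun e : G.edgeSet => fe (e : Sym2 V)) with hf
  have himg : f '' Set.univ = Set.Icc 1 (Fintype.card V + G.edgeFinset.card) := by
    rw [← Finset.coe_univ, ← Finset.coe_image, h2, Finset.coe_Icc]
  refine ⟨fun x _ => ?_, h1.injOn, ?_⟩
  · rw [← himg]; exact Set.mem_image_of_mem f trivial
  · rw [← himg]; exact Set.Subset.rfl


def fv3 : Option (Fin 3 × Bool) → ℕ
  | none => 10
  | some (i, false) => ![6,3,2] i
  | some (i, true) => ![8,9,7] i

def dir3 : Option (Fin 3 × Bool) → Option (Fin 3 × Bool) → ℕ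
  | none, some (i, false) => ![1,5,4] i
  | some (i, false), some (j, true) => if i = j then ![12,11,13] i else 0
  | _, _ => 0

def fe3 : Sym2 (Option (Fin 3 × Bool)) → ℕ :=
  Sym2.lift ⟨fun a b => dir3 a b + dir3 b a, fun a b => Nat.add_comm _ _⟩


def fv5 : Option (Fin 5 × Bool) → ℕ
  | none => 1
  | some (i, false) => ![20,15,21,19,18] i
  | some (i, true) => ![17,7,14,10,12] i

def dir5 : Option (Fin 5 × Bool) → Option (Fin 5 × Bool) → ℕ
  | none, some (i, false) => ![8,3,4,2,5] i
  | some (i, false), some (j, true) => if i = j then ![6,16,9,13,11] i else 0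
  | _, _ => 0

def fe5 : Sym2 (Option (Fin 5 × Bool)) → ℕ :=
  Sym2.lift ⟨fun a b => dir5 a b + dir5 b a, fun a b => Nat.add_comm _ _⟩


def fv7 : Option (Fin 7 × Bool) → ℕ
  | none => 1
  | some (i, false) => ![29,16,18,20,28,17,19] i
  | some (i, true) => ![27,10,11,12,23,14,15] i

def dir7 : Option (Fin 7 × Bool) → Option (Fin 7 × Bool) → ℕ
  | none, some (i, false) => ![8,4,3,2,5,7,6] i
  | some (i, false), some (j, true) => if i = j then ![9,26,25,24,13,22,21] i else 0
  | _, _ => 0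

def fe7 : Sym2 (Option (Fin 7 × Bool)) → ℕ :=
  Sym2.lift ⟨fun a b => dir7 a b + dir7 b a, fun a b => Nat.add_comm _ _⟩


def fv9 : Option (Fin 9 × Bool) → ℕ
  | none => 1
  | some (i, false) => ![27,28,11,15,17,16,12,14,13] i
  | some (i, true) => ![37,36,20,21,22,23,24,25,26] i

def dir9 : Option (Fin 9 × Bool) → Option (Fin 9 × Bool) → ℕ
  | none, some (i, false) => ![7,5,6,3,2,4,9,8,10] i
  | some (i, false), some (j, true) => if i = j then ![18,19,35,34,33,32,31,30,29] i else 0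
  | _, _ => 0

def fe9 : Sym2 (Option (Fin 9 × Bool)) → ℕ :=
  Sym2.lift ⟨fun a b => dir9 a b + dir9 b a, fun a b => Nat.add_comm _ _⟩


/-- For every odd `3 ≤ n ≤ 9`, the spider `Sp(2^[n])` admits a local antimagic total labeling
with exactly `2` distinct vertex weights in which the weight of the center `x` equals the
common weight of all leaves `v_i`, and `(n+1)(n+2)/2 ≤ w(x) ≤ 6n + 3`. -/
theorem spider2_odd_two_weights (n : ℕ) (hodd : Odd n) (h3 : 3 ≤ n) (h9 : n ≤ 9) :
    ∃ fv fe, IsLocalAntimagicTotal (spider2 n) fv fe ∧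
      (Finset.univ.image (latWeight (spider2 n) fv fe)).card = 2 ∧
      (∀ i : Fin n, latWeight (spider2 n) fv fe (some (i, true)) =
        latWeight (spider2 n) fv fe none) ∧
      (n + 1) * (n + 2) / 2 ≤ latWeight (spider2 n) fv fe none ∧
      latWeight (spider2 n) fv fe none ≤ 6 * n + 3 := by
  have hn : n = 3 ∨ n = 5 ∨ n = 7 ∨ n = 9 := by
    rw [Nat.odd_iff] at hodd; omega
  rcases hn with rfl | rfl | rfl | rfl
  · exact ⟨fv3, fe3, ⟨isTotalLabeling_of _ _ _ (by decide) (by decide), by decide⟩,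
      by decide, by decide, by decide, by decide⟩
  · exact ⟨fv5, fe5, ⟨isTotalLabeling_of _ _ _ (by decide) (by decide), by decide⟩,
      by decide, by decide, by decide, by decide⟩
  · exact ⟨fv7, fe7, ⟨isTotalLabeling_of _ _ _ (by decide) (by decide), by decide⟩,
      by decide, by decide, by decide, by decide⟩
  · exact ⟨fv9, fe9, ⟨isTotalLabeling_of _ _ _ (by decide) (by decide), by decide⟩,
      by decide, by decide, by decide, by decide⟩
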